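/- A 2-absolutely summing operator cannot restrict to an isomorphism on an infinite-dimensional subspace: if u : X → Y is 2-absolutely summing and Z ⊆ X is a closed subspace such that u|_Z is an isomorphism onto its image, then Z is finite-dimensional. In particular, no 2-absolutely summing operator on an infinite-dimensional ℓ₂ is bounded below. -/

import Mathlib

open scoped BigOperators

/-- The `n`-th Rademacher function `rₙ(t) = sign(sin(2^{n+1} π t))`,
realized as `(-1)^⌊2^{n+1} t⌋`. -/
noncomputable def rademacher (n : ℕ) (t : ℝ) : ℝ :=
  (-1 : ℝ) ^ ⌊(2 : ℝ) ^ (n + 1) * t⌋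

/-- `X` has cotype 2 with constant `C`:
`(Σ‖xₙ‖²)^{1/2} ≤ C ∫₀¹ ‖Σ rₙ(t) xₙ‖ dt` for all finite families. -/
noncomputable def HasCotype2With (X : Type) [NormedAddCommGroup X] [NormedSpace ℝ X]
    (C : ℝ) : Prop :=
  ∀ (n : ℕ) (x : Fin n → X),
    (∑ i, ‖x i‖ ^ (2 : ℝ)) ^ ((2 : ℝ)⁻¹) ≤
      C * ∫ t in (0 : ℝ)..1, ‖∑ i, rademacher i.1 t • x i‖

/-- `u` is `p`-absolutely summing with constant `lam`:
`(Σ‖u xᵢ‖^p)^{1/p} ≤ lam · sup_{‖f‖≤1} (Σ|f(xᵢ)|^p)^{1/p}` for all finite families. -/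
noncomputable def IsPSummingWith {X Y : Type}
    [NormedAddCommGroup X] [NormedSpace ℝ X] [NormedAddCommGroup Y] [NormedSpace ℝ Y]
    (p : ℝ) (u : X →L[ℝ] Y) (lam : ℝ) : Prop :=
  ∀ (n : ℕ) (x : Fin n → X),
    (∑ i, ‖u (x i)‖ ^ p) ^ p⁻¹ ≤
      lam * sSup {r : ℝ | ∃ f : X →L[ℝ] ℝ, ‖f‖ ≤ 1 ∧ r = (∑ i, |f (x i)| ^ p) ^ p⁻¹}

/-- The `p`-absolutely summing norm `π_p(u)`. -/
noncomputable def piNorm {X Y : Type}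
    [NormedAddCommGroup X] [NormedSpace ℝ X] [NormedAddCommGroup Y] [NormedSpace ℝ Y]
    (p : ℝ) (u : X →L[ℝ] Y) : ℝ :=
  sInf {lam : ℝ | 0 ≤ lam ∧ IsPSummingWith p u lam}

/-- The nuclear norm `ν₁(u) = inf {Σ‖fₙ‖‖yₙ‖ : u(x) = Σ fₙ(x) yₙ}`. -/
noncomputable def nu1 {X Y : Type}
    [NormedAddCommGroup X] [NormedSpace ℝ X] [NormedAddCommGroup Y] [NormedSpace ℝ Y]
    (u : X →L[ℝ] Y) : ℝ :=
  sInf {r : ℝ | ∃ (f : ℕ → (X →L[ℝ] ℝ)) (y : ℕ → Y),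
    Summable (fun n => ‖f n‖ * ‖y n‖) ∧
    (∀ x, HasSum (fun n => f n x • y n) (u x)) ∧
    r = ∑' n, ‖f n‖ * ‖y n‖}

/-- `u : X → Y` factors through an `L₁(μ)`-space with factorization constant `≤ r`:
there are a measure `μ` and operators `v : X → L₁(μ)`, `w : L₁(μ) → Y**` with
`k_Y ∘ u = w ∘ v` and `‖v‖‖w‖ ≤ r`. -/
def L1FactorableWith {X Y : Type}
    [NormedAddCommGroup X] [NormedSpace ℝ X] [NormedAddCommGroup Y] [NormedSpace ℝ Y]
    (u : X →L[ℝ] Y) (r : ℝ) : Prop :=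
  ∃ (Ω : Type) (_ : MeasurableSpace Ω) (μ : MeasureTheory.Measure Ω)
    (v : X →L[ℝ] MeasureTheory.Lp ℝ 1 μ)
    (w : MeasureTheory.Lp ℝ 1 μ →L[ℝ] StrongDual ℝ (StrongDual ℝ Y)),
    (∀ x, w (v x) = NormedSpace.inclusionInDoubleDual ℝ Y (u x)) ∧ ‖v‖ * @norm _ (ContinuousLinearMap.hasOpNorm (𝕜 := ℝ) (𝕜₂ := ℝ) (σ₁₂ := RingHom.id ℝ)
      (E := MeasureTheory.Lp ℝ 1 μ) (F := StrongDual ℝ (StrongDual ℝ Y))) w ≤ r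

/-- `u` is `L₁`-factorable. -/
def L1Factorable {X Y : Type}
    [NormedAddCommGroup X] [NormedSpace ℝ X] [NormedAddCommGroup Y] [NormedSpace ℝ Y]
    (u : X →L[ℝ] Y) : Prop :=
  ∃ r : ℝ, L1FactorableWith u r

-- rpow helpers
lemma rpow_two_eq (x : ℝ) : x ^ (2:ℝ) = x ^ (2:ℕ) := by
  rw [show (2:ℝ) = ((2:ℕ):ℝ) by norm_num, Real.rpow_natCast]

lemma rpow_half_sq {x : ℝ} (hx : 0 ≤ x) : (x ^ ((2:ℝ)⁻¹)) ^ (2:ℕ) = x := by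
  rw [← Real.rpow_natCast (x ^ ((2:ℝ)⁻¹)) 2, ← Real.rpow_mul hx]
  norm_num

abbrev dualBall (X : Type) [NormedAddCommGroup X] [NormedSpace ℝ X] : Type :=
  {f : X →L[ℝ] ℝ // ‖f‖ ≤ 1}

noncomputable def bcfAux {X : Type} [NormedAddCommGroup X] [NormedSpace ℝ X] (x y : X) :
    BoundedContinuousFunction (dualBall X) ℝ :=
  BoundedContinuousFunction.ofNormedAddCommGroup
    (fun f => f.1 x * f.1 y)
    (((ContinuousLinearMap.apply ℝ ℝ x).continuous.comp continuous_subtype_val).mul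
      ((ContinuousLinearMap.apply ℝ ℝ y).continuous.comp continuous_subtype_val))
    (‖x‖ * ‖y‖)
    (by
      intro f
      have hx := f.1.le_opNorm x
      have hy := f.1.le_opNorm y
      have hf := f.2
      have h1 : |f.1 x| ≤ ‖x‖ := by
        calc |f.1 x| = ‖f.1 x‖ := rfl
        _ ≤ ‖f.1‖ * ‖x‖ := hx
        _ ≤ 1 * ‖x‖ := by gcongr
        _ = ‖x‖ := one_mul _
      have h2 : |f.1 y| ≤ ‖y‖ := by
        calc |f.1 y| = ‖f.1 y‖ := rfl
        _ ≤ ‖f.1‖ * ‖y‖ := hy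
        _ ≤ 1 * ‖y‖ := by gcongr
        _ = ‖y‖ := one_mul _
      calc ‖f.1 x * f.1 y‖ = |f.1 x| * |f.1 y| := abs_mul _ _
      _ ≤ ‖x‖ * ‖y‖ := by
          exact mul_le_mul h1 h2 (abs_nonneg _) (norm_nonneg x))

@[simp] lemma bcfAux_apply {X : Type} [NormedAddCommGroup X] [NormedSpace ℝ X]
    (x y : X) (f : dualBall X) : bcfAux x y f = f.1 x * f.1 y := rfl

section bcflin
variable {X : Type} [NormedAddCommGroup X] [NormedSpace ℝ X]

lemma bcfAux_comm (x y : X) : bcfAux x y = bcfAux y x := by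
  ext f; simp [mul_comm]

lemma bcfAux_add_left (x x' y : X) : bcfAux (x + x') y = bcfAux x y + bcfAux x' y := by
  ext f; simp [add_mul]

lemma bcfAux_smul_left (r : ℝ) (x y : X) : bcfAux (r • x) y = r • bcfAux x y := by
  ext f; simp [mul_assoc]

lemma bcfAux_self_nonneg (x : X) (f : dualBall X) : 0 ≤ bcfAux x x f :=
  mul_self_nonneg _

lemma bcfAux_self_le (x : X) (f : dualBall X) :
    bcfAux x x f ≤ ‖x‖ ^ 2 := by
  have h1 : |f.1 x| ≤ ‖x‖ := by
    calc |f.1 x| = ‖f.1 x‖ := rfl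
    _ ≤ ‖f.1‖ * ‖x‖ := f.1.le_opNorm x
    _ ≤ 1 * ‖x‖ := by gcongr; exact f.2
    _ = ‖x‖ := one_mul _
  have : bcfAux x x f = |f.1 x| ^ 2 := by simp [sq_abs, sq]
  rw [this]
  exact pow_le_pow_left₀ (abs_nonneg _) h1 2

end bcflin

/-- Pietsch-type positive functional from the 2-summing property. -/
lemma exists_pietsch_functional {X Y : Type}
    [NormedAddCommGroup X] [NormedSpace ℝ X] [NormedAddCommGroup Y] [NormedSpace ℝ Y]
    (u : X →L[ℝ] Y) (lam : ℝ) (hlam : 0 < lam) (hsum : IsPSummingWith 2 u lam) :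
    ∃ φ : BoundedContinuousFunction (dualBall X) ℝ →L[ℝ] ℝ,
      (∀ h : BoundedContinuousFunction (dualBall X) ℝ, (∀ f, 0 ≤ h f) → 0 ≤ φ h) ∧
      0 < φ (BoundedContinuousFunction.const (dualBall X) (1:ℝ)) ∧
      ∀ x : X, ‖u x‖ ^ 2 * φ (BoundedContinuousFunction.const (dualBall X) (1:ℝ)) ≤
        lam ^ 2 * φ (bcfAux x x) := by
  classical
  set one : BoundedContinuousFunction (dualBall X) ℝ :=
    BoundedContinuousFunction.const (dualBall X) (1:ℝ) with hone
  set P : Set (BoundedContinuousFunction (dualBall X) ℝ) :=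
    {h | ∃ δ : ℝ, 0 < δ ∧ ∀ f, δ ≤ h f} with hP
  set F : Set (BoundedContinuousFunction (dualBall X) ℝ) :=
    {g | ∃ (n : ℕ) (x : Fin n → X), ∀ f : dualBall X,
      g f = ∑ i, (‖u (x i)‖ ^ 2 - lam ^ 2 * (f.1 (x i)) ^ 2)} with hF
  have hPopen : IsOpen P := by
    rw [Metric.isOpen_iff]
    rintro h ⟨δ, hδ, hδle⟩
    refine ⟨δ/2, by linarith, ?_⟩
    intro h' hh'
    refine ⟨δ/2, by linarith, fun f => ?_⟩
    have hle := BoundedContinuousFunction.dist_coe_le_dist (f := h') (g := h) f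
    have hd : dist (h' f) (h f) < δ/2 := lt_of_le_of_lt hle hh'
    have habs := abs_sub_lt_iff.mp (by rwa [Real.dist_eq] at hd)
    have hlf := hδle f
    linarith [habs.1, habs.2]
  have hPconv : Convex ℝ P := by
    rintro h₁ ⟨δ₁, hδ₁, h₁le⟩ h₂ ⟨δ₂, hδ₂, h₂le⟩ a b ha hb hab
    refine ⟨min δ₁ δ₂, lt_min hδ₁ hδ₂, fun f => ?_⟩
    have e1 : (a • h₁ + b • h₂) f = a * h₁ f + b * h₂ f := by
      simp [BoundedContinuousFunction.add_apply, BoundedContinuousFunction.smul_apply,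
        smul_eq_mul]
    rw [e1]
    have m1 : min δ₁ δ₂ ≤ δ₁ := min_le_left _ _
    have m2 : min δ₁ δ₂ ≤ δ₂ := min_le_right _ _
    nlinarith [h₁le f, h₂le f]
  have hFconv : Convex ℝ F := by
    rintro g₁ ⟨n, x, hx⟩ g₂ ⟨m, y, hy⟩ a b ha hb hab
    refine ⟨n + m, Fin.append (fun i => Real.sqrt a • x i) (fun j => Real.sqrt b • y j),
      fun f => ?_⟩
    have e1 : (a • g₁ + b • g₂) f = a * g₁ f + b * g₂ f := by
      simp [BoundedContinuousFunction.add_apply, BoundedContinuousFunction.smul_apply,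
        smul_eq_mul]
    rw [e1, hx f, hy f, Fin.sum_univ_add]
    simp only [Fin.append_left, Fin.append_right]
    have key : ∀ (c : ℝ), 0 ≤ c → ∀ z : X,
        ‖u (Real.sqrt c • z)‖ ^ 2 - lam ^ 2 * (f.1 (Real.sqrt c • z)) ^ 2
          = c * (‖u z‖ ^ 2 - lam ^ 2 * (f.1 z) ^ 2) := by
      intro c hc z
      have : ‖u (Real.sqrt c • z)‖ = Real.sqrt c * ‖u z‖ := by
        rw [map_smul, norm_smul, Real.norm_eq_abs, abs_of_nonneg (Real.sqrt_nonneg c)]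
      rw [this, map_smul]
      simp only [smul_eq_mul, mul_pow]
      rw [Real.sq_sqrt hc]
      ring
    rw [Finset.mul_sum, Finset.mul_sum]
    congr 1
    · exact Finset.sum_congr rfl fun i _ => (key a ha (x i)).symm
    · exact Finset.sum_congr rfl fun j _ => (key b hb (y j)).symm
  have hdisj : Disjoint P F := by
    rw [Set.disjoint_left]
    rintro g ⟨δ, hδ, hg⟩ ⟨n, x, hx⟩
    set T : ℝ := ∑ i, ‖u (x i)‖ ^ 2 with hT
    have key : ∀ f : X →L[ℝ] ℝ, ‖f‖ ≤ 1 → lam ^ 2 * (∑ i, (f (x i)) ^ 2) ≤ T - δ := by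
      intro f hf
      have h1 := hg ⟨f, hf⟩
      rw [hx ⟨f, hf⟩] at h1
      dsimp only at h1
      rw [Finset.sum_sub_distrib, ← Finset.mul_sum] at h1
      linarith
    have hTδ : 0 ≤ T - δ := by
      have h0 := key 0 (by simp)
      simp only [ContinuousLinearMap.zero_apply, ne_eq, OfNat.ofNat_ne_zero,
        not_false_eq_true, zero_pow, Finset.sum_const_zero, mul_zero] at h0
      linarith
    have hs := hsum n x
    simp only [rpow_two_eq] at hs
    have hT0 : (0:ℝ) ≤ T := by positivity
    have hSle : sSup {r : ℝ | ∃ f : X →L[ℝ] ℝ, ‖f‖ ≤ 1 ∧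
        r = (∑ i, |f (x i)| ^ (2:ℕ)) ^ ((2:ℝ)⁻¹)} ≤ ((T - δ) / lam ^ 2) ^ ((2:ℝ)⁻¹) := by
      apply Real.sSup_le
      · rintro r ⟨f, hf, rfl⟩
        apply Real.rpow_le_rpow (by positivity) _ (by norm_num)
        rw [le_div_iff₀ (by positivity)]
        have hk := key f hf
        have heq : ∑ i, |f (x i)| ^ (2:ℕ) = ∑ i, (f (x i)) ^ 2 :=
          Finset.sum_congr rfl fun i _ => sq_abs _
        rw [heq]
        linarith
      · positivity
    have hfinal : T ≤ T - δ := by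
      have h2 : (T : ℝ) ^ ((2:ℝ)⁻¹) ≤ lam * ((T - δ) / lam ^ 2) ^ ((2:ℝ)⁻¹) := by
        refine hs.trans ?_
        exact mul_le_mul_of_nonneg_left hSle hlam.le
      have h3 := pow_le_pow_left₀ (Real.rpow_nonneg hT0 _) h2 2
      rw [rpow_half_sq hT0] at h3
      have h4 : (lam * ((T - δ) / lam ^ 2) ^ ((2:ℝ)⁻¹)) ^ (2:ℕ)
          = lam ^ 2 * ((T - δ) / lam ^ 2) := by
        rw [mul_pow, rpow_half_sq (by positivity)]
      rw [h4] at h3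
      calc T ≤ lam ^ 2 * ((T - δ) / lam ^ 2) := h3
      _ = T - δ := by field_simp
    linarith
  obtain ⟨φ₀, α, hPlt, hFge⟩ := geometric_hahn_banach_open hPconv hPopen hFconv hdisj
  have h0F : (0 : BoundedContinuousFunction (dualBall X) ℝ) ∈ F :=
    ⟨0, fun _ => 0, fun f => by simp⟩
  have hα0 : α ≤ 0 := by simpa using hFge 0 h0F
  have honeP : ∀ t : ℝ, 0 < t → (t • one) ∈ P := by
    intro t ht
    refine ⟨t, ht, fun f => ?_⟩
    rw [BoundedContinuousFunction.smul_apply]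
    simp [hone]
  have hφone_neg : φ₀ one < 0 := by
    have h1 := hPlt (1 • one) (honeP 1 one_pos)
    simp only [one_smul] at h1
    linarith
  have hα_nonneg : 0 ≤ α := by
    by_contra hcon
    push_neg at hcon
    have hne : φ₀ one ≠ 0 := ne_of_lt hφone_neg
    have ht : 0 < α / (2 * φ₀ one) := div_pos_of_neg_of_neg hcon (by linarith)
    have h1 := hPlt _ (honeP _ ht)
    rw [map_smul, smul_eq_mul] at h1
    have h2 : α / (2 * φ₀ one) * φ₀ one = α / 2 := by
      field_simp
    rw [h2] at h1
    linarith
  have hα : α = 0 := le_antisymm hα0 hα_nonneg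
  refine ⟨-φ₀, ?_, ?_, ?_⟩
  · -- positivity
    intro h hh
    simp only [ContinuousLinearMap.neg_apply, Left.nonneg_neg_iff]
    by_contra hcon
    push_neg at hcon
    have hne : φ₀ one ≠ 0 := ne_of_lt hφone_neg
    have hmemP : ∀ ε : ℝ, 0 < ε → (h + ε • one) ∈ P := by
      intro ε hε
      refine ⟨ε, hε, fun f => ?_⟩
      rw [BoundedContinuousFunction.add_apply, BoundedContinuousFunction.smul_apply]
      have := hh f
      simp only [hone, BoundedContinuousFunction.const_apply, smul_eq_mul, mul_one]
      linarith
    have ht : 0 < φ₀ h / (-2 * φ₀ one) := div_pos hcon (by linarith)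
    have h1 := hPlt _ (hmemP _ ht)
    rw [map_add, map_smul, smul_eq_mul, hα] at h1
    have h2 : φ₀ h / (-2 * φ₀ one) * φ₀ one = -(φ₀ h) / 2 := by
      field_simp
    rw [h2] at h1
    linarith
  · simp only [ContinuousLinearMap.neg_apply]
    linarith
  · intro x
    have hmem : (BoundedContinuousFunction.const (dualBall X) (‖u x‖ ^ 2)
        - lam ^ 2 • bcfAux x x) ∈ F := by
      refine ⟨1, fun _ => x, fun f => ?_⟩
      simp [Fin.sum_univ_one, sq]
    have h1 := hFge _ hmem
    rw [hα] at h1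
    rw [map_sub] at h1
    have h2 : φ₀ (BoundedContinuousFunction.const (dualBall X) (‖u x‖ ^ 2))
        = ‖u x‖ ^ 2 * φ₀ one := by
      have : BoundedContinuousFunction.const (dualBall X) (‖u x‖ ^ 2)
          = ‖u x‖ ^ 2 • one := by
        ext f; simp [hone]
      rw [this, map_smul, smul_eq_mul]
    rw [h2, map_smul, smul_eq_mul] at h1
    simp only [ContinuousLinearMap.neg_apply]
    nlinarith [h1]

/-- From a positive definite symmetric bilinear form and a linearly independent family,
produce a `B`-orthonormal family. -/
lemma exists_B_orthonormal {Z : Type} [AddCommGroup Z] [Module ℝ Z]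
    (B : Z →ₗ[ℝ] Z →ₗ[ℝ] ℝ) (hsymm : ∀ z w, B z w = B w z)
    (hpos : ∀ z, 0 ≤ B z z) (hdef : ∀ z, B z z = 0 → z = 0)
    {n : ℕ} (v : Fin n → Z) (hv : LinearIndependent ℝ v) :
    ∃ e : Fin n → Z, ∀ i j, B (e i) (e j) = if i = j then 1 else 0 := by
  haveI : WellFoundedLT (Fin n) := inferInstance
  letI c : InnerProductSpace.Core ℝ Z :=
    { inner := fun z w => B z w
      conj_inner_symm := fun z w => by simpa using hsymm w z
      re_inner_nonneg := fun z => by simpa using hpos z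
      add_left := fun z w y => by simp
      smul_left := fun z w r => by simp
      definite := fun z hz => hdef z hz }
  letI : NormedAddCommGroup Z := c.toNormedAddCommGroup
  letI : InnerProductSpace ℝ Z := InnerProductSpace.ofCore c.toCore
  have horth := InnerProductSpace.gramSchmidtNormed_orthonormal (𝕜 := ℝ) (f := v) hv
  refine ⟨InnerProductSpace.gramSchmidtNormed ℝ v, fun i j => ?_⟩
  have := orthonormal_iff_ite.mp horth i j
  exact this


set_option maxHeartbeats 2000000 in
/-- **2-summing operators are not isomorphisms on infinite-dimensional subspaces.**
If `u : X → Y` is 2-absolutely summing and `Z ⊆ X` is a closed subspace on which `u` is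
bounded below (an isomorphism onto its image), then `Z` is finite-dimensional. -/
theorem finite_dim_of_two_summing_iso_on_subspace
    {X Y : Type}
    [NormedAddCommGroup X] [NormedSpace ℝ X] [CompleteSpace X]
    [NormedAddCommGroup Y] [NormedSpace ℝ Y] [CompleteSpace Y]
    (u : X →L[ℝ] Y) (hu : ∃ c : ℝ, 0 ≤ c ∧ IsPSummingWith 2 u c)
    (Z : Submodule ℝ X) (hZ : IsClosed (Z : Set X))
    (hbelow : ∃ c : ℝ, 0 < c ∧ ∀ z ∈ Z, c * ‖z‖ ≤ ‖u z‖) :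
    FiniteDimensional ℝ Z := by
  classical
  obtain ⟨lam₀, hlam₀, hsum₀⟩ := hu
  obtain ⟨c₀, hc₀, hbel⟩ := hbelow
  set lam : ℝ := lam₀ + 1 with hlamdef
  have hlam : 0 < lam := by rw [hlamdef]; linarith
  have hsum : IsPSummingWith 2 u lam := by
    intro n x
    refine (hsum₀ n x).trans ?_
    have hS : 0 ≤ sSup {r : ℝ | ∃ f : X →L[ℝ] ℝ, ‖f‖ ≤ 1 ∧
        r = (∑ i, |f (x i)| ^ (2:ℝ)) ^ ((2:ℝ)⁻¹)} := by
      apply Real.sSup_nonneg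
      rintro r ⟨f, hf, rfl⟩
      positivity
    exact mul_le_mul_of_nonneg_right (by rw [hlamdef]; linarith) hS
  clear_value lam
  obtain ⟨φ, hφpos, hφone, hφdom⟩ := exists_pietsch_functional u lam hlam hsum
  set c₁ : ℝ := φ (BoundedContinuousFunction.const (dualBall X) (1:ℝ)) with hc₁def
  have hc₁ : 0 < c₁ := hφone
  clear_value c₁
  -- the bilinear form on Z
  obtain ⟨Bz, hBzapp⟩ : ∃ B : ↥Z →ₗ[ℝ] ↥Z →ₗ[ℝ] ℝ,
      ∀ z w : ↥Z, B z w = c₁⁻¹ * φ (bcfAux (z : X) (w : X)) := by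
    refine ⟨LinearMap.mk₂ ℝ
    (fun z w => c₁⁻¹ * φ (bcfAux (z : X) (w : X)))
    (fun z z' w => by
      rw [Submodule.coe_add, bcfAux_add_left, map_add]; ring)
    (fun r z w => by
      rw [Submodule.coe_smul, bcfAux_smul_left, map_smul, smul_eq_mul, smul_eq_mul]; ring)
    (fun z w w' => by
      rw [Submodule.coe_add, bcfAux_comm, bcfAux_add_left, map_add,
        bcfAux_comm (w : X), bcfAux_comm (w' : X)]; ring)
    (fun r z w => by
      rw [Submodule.coe_smul, bcfAux_comm, bcfAux_smul_left, map_smul, smul_eq_mul,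
        smul_eq_mul, bcfAux_comm]; ring), fun z w => rfl⟩
  have hBsymm : ∀ z w : ↥Z, Bz z w = Bz w z := by
    intro z w; rw [hBzapp, hBzapp, bcfAux_comm]
  have hBpos : ∀ z : ↥Z, 0 ≤ Bz z z := by
    intro z
    rw [hBzapp]
    exact mul_nonneg (by positivity) (hφpos _ (bcfAux_self_nonneg _))
  have hdom' : ∀ z : ↥Z, ‖u (z : X)‖ ^ 2 ≤ lam ^ 2 * Bz z z := by
    intro z
    rw [hBzapp]
    have h1 := hφdom (z : X)
    have h2 : lam ^ 2 * (c₁⁻¹ * φ (bcfAux (z:X) (z:X)))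
        = lam ^ 2 * φ (bcfAux (z:X) (z:X)) / c₁ := by
      field_simp
    rw [h2, le_div_iff₀ hc₁]
    linarith
  have hBle : ∀ z : ↥Z, Bz z z ≤ ‖(z : X)‖ ^ 2 := by
    intro z
    rw [hBzapp]
    have hφ2 : φ (bcfAux (z:X) (z:X)) ≤ ‖(z:X)‖ ^ 2 * c₁ := by
      have hmem : ∀ f, 0 ≤ (‖(z:X)‖ ^ 2 • BoundedContinuousFunction.const (dualBall X) (1:ℝ)
          - bcfAux (z:X) (z:X)) f := by
        intro f
        rw [BoundedContinuousFunction.sub_apply, BoundedContinuousFunction.smul_apply]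
        simp only [BoundedContinuousFunction.const_apply, smul_eq_mul, mul_one]
        have := bcfAux_self_le (z:X) f
        linarith
      have := hφpos _ hmem
      rw [map_sub, map_smul, smul_eq_mul, ← hc₁def] at this
      linarith
    rw [inv_mul_le_iff₀ hc₁] at *
    · nlinarith
  have hBdef : ∀ z : ↥Z, Bz z z = 0 → z = 0 := by
    intro z hz
    have h1 := hdom' z
    rw [hz, mul_zero] at h1
    have h2 : ‖u (z : X)‖ = 0 := by nlinarith [norm_nonneg (u (z:X))]
    have h3 := hbel (z : X) z.2
    rw [h2] at h3
    have h4 : ‖(z : X)‖ = 0 := by nlinarith [norm_nonneg (z : X)]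
    have : (z : X) = 0 := norm_eq_zero.mp h4
    exact Subtype.ext this
  -- suppose infinite dimensional
  by_contra hinf
  set M : ℝ := lam ^ 2 / c₀ ^ 2 with hMdef
  clear_value M
  set n : ℕ := ⌊M ^ 2⌋₊ + 1 with hndef
  clear_value n
  -- a linearly independent family of size n
  have hinfI : Infinite (Module.Basis.ofVectorSpaceIndex ℝ ↥Z) := by
    by_contra hfin
    rw [not_infinite_iff_finite] at hfin
    haveI := hfin
    haveI := Fintype.ofFinite (Module.Basis.ofVectorSpaceIndex ℝ ↥Z)
    exact hinf (Module.Finite.of_basis (Module.Basis.ofVectorSpace ℝ ↥Z))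
  have hv := (Module.Basis.ofVectorSpace ℝ ↥Z).linearIndependent.comp
      ⇑((Fin.valEmbedding (n := n)).trans (Infinite.natEmbedding (Module.Basis.ofVectorSpaceIndex ℝ ↥Z)))
      ((Fin.valEmbedding (n := n)).trans (Infinite.natEmbedding (Module.Basis.ofVectorSpaceIndex ℝ ↥Z))).injective
  obtain ⟨e, he⟩ := exists_B_orthonormal Bz hBsymm hBpos hBdef _ hv
  -- apply the 2-summing inequality to the orthonormal family
  have hs := hsum n (fun i => ((e i : X)))
  simp only [rpow_two_eq] at hs
  set T : ℝ := ∑ i, ‖u ((e i : X))‖ ^ (2:ℕ) with hTdef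
  have hT0 : (0:ℝ) ≤ T := by rw [hTdef]; positivity
  clear_value T
  -- lower bound for T
  have hTlow : (n : ℝ) * c₀ ^ 2 ≤ T := by
    have hterm : ∀ i : Fin n, c₀ ^ 2 ≤ ‖u ((e i : X))‖ ^ (2:ℕ) := by
      intro i
      have h1 : Bz (e i) (e i) = 1 := by rw [he i i]; simp
      have h2 : (1:ℝ) ≤ ‖(e i : X)‖ ^ 2 := by
        have := hBle (e i); rw [h1] at this; linarith
      have h3 := hbel (e i : X) (e i).2
      have h4 : (c₀ * ‖(e i : X)‖) ^ 2 ≤ ‖u ((e i : X))‖ ^ 2 :=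
        pow_le_pow_left₀ (by positivity) h3 2
      nlinarith [h4, sq_nonneg c₀]
    calc (n : ℝ) * c₀ ^ 2 = ∑ _i : Fin n, c₀ ^ 2 := by
          rw [Finset.sum_const, Finset.card_univ, Fintype.card_fin, nsmul_eq_mul]
    _ ≤ ∑ i, ‖u ((e i : X))‖ ^ (2:ℕ) := Finset.sum_le_sum fun i _ => hterm i
    _ = T := hTdef.symm
  -- upper bound for the sSup
  have hSle : sSup {r : ℝ | ∃ f : X →L[ℝ] ℝ, ‖f‖ ≤ 1 ∧
      r = (∑ i, |f ((e i : X))| ^ (2:ℕ)) ^ ((2:ℝ)⁻¹)} ≤ lam / c₀ := by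
    apply Real.sSup_le
    · rintro r ⟨f, hf, rfl⟩
      obtain ⟨cf, hcf⟩ : ∃ g : Fin n → ℝ, ∀ i, g i = f ((e i : X)) := ⟨_, fun i => rfl⟩
      obtain ⟨s2, hs2⟩ : ∃ s : ℝ, s = ∑ i, cf i ^ 2 := ⟨_, rfl⟩
      have hs20 : 0 ≤ s2 := by rw [hs2]; positivity
      have heq : ∑ i, |f ((e i : X))| ^ (2:ℕ) = s2 := by
        rw [hs2]
        exact Finset.sum_congr rfl fun i _ => by rw [hcf, sq_abs]
      rw [heq]
      obtain ⟨a, ha⟩ : ∃ a : ↥Z, a = ∑ i, cf i • e i := ⟨_, rfl⟩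
      have hacoe : (a : X) = ∑ i, cf i • (e i : X) := by
        rw [ha]; push_cast; rfl
      have hfa : f (a : X) = s2 := by
        rw [hacoe, map_sum, hs2]
        exact Finset.sum_congr rfl fun i _ => by rw [map_smul, smul_eq_mul, hcf, sq]
      have hBaj : ∀ j, Bz a (e j) = cf j := by
        intro j
        rw [ha, map_sum, LinearMap.sum_apply]
        have : ∀ i : Fin n, (Bz (cf i • e i)) (e j) = cf i * (if i = j then 1 else 0) := by
          intro i
          rw [map_smul, LinearMap.smul_apply, smul_eq_mul, he i j]
        rw [Finset.sum_congr rfl fun i _ => this i]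
        simp [mul_ite, Finset.sum_ite_eq', mul_one, mul_zero]
      have hBa : Bz a a = s2 := by
        have hterm : ∀ j, (Bz a) (cf j • e j) = cf j ^ 2 := by
          intro j
          rw [map_smul, smul_eq_mul, hBaj j, sq]
        calc Bz a a = (Bz a) (∑ j, cf j • e j) := by rw [← ha]
        _ = ∑ j, (Bz a) (cf j • e j) := map_sum _ _ _
        _ = ∑ j, cf j ^ 2 := Finset.sum_congr rfl fun j _ => hterm j
        _ = s2 := hs2.symm
      have hs2a : s2 ≤ ‖(a : X)‖ := by
        calc s2 = f (a : X) := hfa.symm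
        _ ≤ |f (a : X)| := le_abs_self _
        _ ≤ ‖f‖ * ‖(a : X)‖ := f.le_opNorm _
        _ ≤ 1 * ‖(a : X)‖ := by gcongr
        _ = ‖(a : X)‖ := one_mul _
      have hua : ‖u (a : X)‖ ^ 2 ≤ lam ^ 2 * s2 := by
        have := hdom' a; rwa [hBa] at this
      have hca : c₀ * ‖(a : X)‖ ≤ ‖u (a : X)‖ := hbel (a : X) a.2
      have hs2le : s2 ≤ lam ^ 2 / c₀ ^ 2 := by
        have k1 : s2 ^ 2 ≤ ‖(a : X)‖ ^ 2 := pow_le_pow_left₀ hs20 hs2a 2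
        have k2 : (c₀ * ‖(a : X)‖) ^ 2 ≤ ‖u (a : X)‖ ^ 2 :=
          pow_le_pow_left₀ (by positivity) hca 2
        have key : c₀ ^ 2 * s2 ^ 2 ≤ lam ^ 2 * s2 := by
          nlinarith [k1, k2, hua, sq_nonneg c₀]
        rw [le_div_iff₀ (by positivity)]
        nlinarith [key, hs20, mul_pos hlam hlam]
      have hr0 : 0 ≤ s2 ^ ((2:ℝ)⁻¹) := Real.rpow_nonneg hs20 _
      have hr2 : (s2 ^ ((2:ℝ)⁻¹)) ^ (2:ℕ) = s2 := rpow_half_sq hs20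
      have hq : (0:ℝ) < lam / c₀ := by positivity
      have hrsq : (s2 ^ ((2:ℝ)⁻¹)) ^ (2:ℕ) ≤ (lam / c₀) ^ 2 := by
        rw [hr2, div_pow]; exact hs2le
      rw [hr2] at hrsq
      have := (pow_le_pow_iff_left₀ hr0 hq.le (two_ne_zero)).mp (by rw [hr2]; exact hrsq)
      exact this
    · positivity
  -- combine
  have hs' : T ^ ((2:ℝ)⁻¹) ≤ lam * (lam / c₀) :=
    hs.trans (mul_le_mul_of_nonneg_left hSle hlam.le)
  have h3 := pow_le_pow_left₀ (Real.rpow_nonneg hT0 _) hs' 2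
  rw [rpow_half_sq hT0] at h3
  have h4 : (lam * (lam / c₀)) ^ (2:ℕ) = M ^ 2 * c₀ ^ 2 := by
    rw [hMdef]; field_simp
  rw [h4] at h3
  have h5 : (n : ℝ) ≤ M ^ 2 := by
    have h6 : (n : ℝ) * c₀ ^ 2 ≤ M ^ 2 * c₀ ^ 2 := le_trans hTlow h3
    exact le_of_mul_le_mul_right h6 (by positivity)
  have h7 : M ^ 2 < (n : ℝ) := by
    rw [hndef]
    push_cast
    exact Nat.lt_floor_add_one _
  linarith
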